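/- Let h₁ : S^m → S^m and h₂ : Sⁿ → Sⁿ be homeomorphisms. Then the map h defined on the glued space M^{m+n+1}_{(h₁,h₂)} by h(x̃,ỹ) = (x̃/√(1+‖x̃‖²), ỹ/√(1+‖x̃‖²)) on the chart ℝ^{m+1}×Sⁿ and h(x̄,ȳ) = (h₁⁻¹(x̄)/√(1+‖ȳ‖²), ‖ȳ‖h₂⁻¹(ȳ/‖ȳ‖)/√(1+‖ȳ‖²)) on the chart S^m×ℝ^{n+1} is a bijection onto S^{m+n+1}. -/

import Mathlib

open Metric in
/-- The gluing relation of the Milnor construction: `(t•x, y) ∼ (h₁ x, t⁻¹ • h₂ y)`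
for `t > 0`, `x ∈ Sᵐ`, `y ∈ Sⁿ`. -/
def milnorRel (m n : ℕ)
    (h₁ : sphere (0 : EuclideanSpace ℝ (Fin (m + 1))) 1 ≃ₜ
          sphere (0 : EuclideanSpace ℝ (Fin (m + 1))) 1)
    (h₂ : sphere (0 : EuclideanSpace ℝ (Fin (n + 1))) 1 ≃ₜ
          sphere (0 : EuclideanSpace ℝ (Fin (n + 1))) 1) :
    (EuclideanSpace ℝ (Fin (m + 1)) × sphere (0 : EuclideanSpace ℝ (Fin (n + 1))) 1) ⊕
      (sphere (0 : EuclideanSpace ℝ (Fin (m + 1))) 1 × EuclideanSpace ℝ (Fin (n + 1))) →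
    (EuclideanSpace ℝ (Fin (m + 1)) × sphere (0 : EuclideanSpace ℝ (Fin (n + 1))) 1) ⊕
      (sphere (0 : EuclideanSpace ℝ (Fin (m + 1))) 1 × EuclideanSpace ℝ (Fin (n + 1))) →
    Prop
  | Sum.inl p, Sum.inr q =>
      ∃ t : ℝ, 0 < t ∧ ∃ (x : sphere (0 : EuclideanSpace ℝ (Fin (m + 1))) 1) (y : sphere (0 : EuclideanSpace ℝ (Fin (n + 1))) 1), p.1 = t • (x : EuclideanSpace ℝ (Fin (m + 1))) ∧ p.2 = y ∧
        q.1 = h₁ x ∧ q.2 = t⁻¹ • ((h₂ y : sphere (0 : EuclideanSpace ℝ (Fin (n + 1))) 1) :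
          EuclideanSpace ℝ (Fin (n + 1)))
  | _, _ => False

open Metric in
/-- Radial inverse normalization `ȳ ↦ h₂⁻¹(ȳ/‖ȳ‖)` (defined as `0` at `ȳ = 0`). -/
noncomputable def invNormalize (n : ℕ)
    (h₂ : sphere (0 : EuclideanSpace ℝ (Fin (n + 1))) 1 ≃ₜ
          sphere (0 : EuclideanSpace ℝ (Fin (n + 1))) 1)
    (y : EuclideanSpace ℝ (Fin (n + 1))) : EuclideanSpace ℝ (Fin (n + 1)) :=
  haveI := Classical.dec (y = 0)
  if h : y = 0 then 0
  else (h₂.symm ⟨‖y‖⁻¹ • y, by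
    rw [mem_sphere_zero_iff_norm, norm_smul, norm_inv, norm_norm,
      inv_mul_cancel₀ (norm_ne_zero_iff.mpr h)]⟩ :
    sphere (0 : EuclideanSpace ℝ (Fin (n + 1))) 1)

open Metric in
/-- The chart-wise map `h` of the construction, on the disjoint union. -/
noncomputable def milnorMap (m n : ℕ)
    (h₁ : sphere (0 : EuclideanSpace ℝ (Fin (m + 1))) 1 ≃ₜ
          sphere (0 : EuclideanSpace ℝ (Fin (m + 1))) 1)
    (h₂ : sphere (0 : EuclideanSpace ℝ (Fin (n + 1))) 1 ≃ₜ
          sphere (0 : EuclideanSpace ℝ (Fin (n + 1))) 1) :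
    (EuclideanSpace ℝ (Fin (m + 1)) × sphere (0 : EuclideanSpace ℝ (Fin (n + 1))) 1) ⊕
      (sphere (0 : EuclideanSpace ℝ (Fin (m + 1))) 1 × EuclideanSpace ℝ (Fin (n + 1))) →
    EuclideanSpace ℝ (Fin (m + 1)) × EuclideanSpace ℝ (Fin (n + 1))
  | Sum.inl p =>
      ((Real.sqrt (1 + ‖p.1‖ ^ 2))⁻¹ • p.1,
        (Real.sqrt (1 + ‖p.1‖ ^ 2))⁻¹ • (p.2 : EuclideanSpace ℝ (Fin (n + 1))))
  | Sum.inr q =>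
      ((Real.sqrt (1 + ‖q.2‖ ^ 2))⁻¹ •
          ((h₁.symm q.1 : sphere (0 : EuclideanSpace ℝ (Fin (m + 1))) 1) :
            EuclideanSpace ℝ (Fin (m + 1))),
        (Real.sqrt (1 + ‖q.2‖ ^ 2))⁻¹ • ‖q.2‖ • invNormalize n h₂ q.2)

/-! The map is inverted explicitly on the sphere: a point `(a, b)` with `b ≠ 0` comes from the
first chart as `(a / ‖b‖, b / ‖b‖)`, and a point `(a, 0)` from the second chart as `(h₁ a, 0)`.
Every point of the disjoint union is glued to the preimage chosen this way (a second-chart point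
`(x̄, ȳ)` with `ȳ ≠ 0` via `t = ‖ȳ‖⁻¹`), and glued points have equal images because
`√(1 + t⁻²) = t⁻¹ √(1 + t²)`. -/

open Metric

local notation "𝔼" k:max => EuclideanSpace ℝ (Fin (k + 1))
local notation "𝕊" k:max => sphere (0 : EuclideanSpace ℝ (Fin (k + 1))) 1

lemma sqrt_one_add_inv_sq {t : ℝ} (ht : 0 < t) :
    √(1 + t⁻¹ ^ 2) = t⁻¹ * √(1 + t ^ 2) := by
  rw [Real.sqrt_eq_iff_eq_sq (by positivity) (by positivity), mul_pow, Real.sq_sqrt (by positivity)]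
  field_simp
  ring

lemma norm_sq_add_norm_sq_inv_sqrt_smul {E F : Type*} [NormedAddCommGroup E] [NormedSpace ℝ E]
    [NormedAddCommGroup F] [NormedSpace ℝ F] {r : ℝ} {u : E} {v : F} (hu : ‖u‖ = r)
    (hv : ‖v‖ = 1) : ‖(√(1 + r ^ 2))⁻¹ • u‖ ^ 2 + ‖(√(1 + r ^ 2))⁻¹ • v‖ ^ 2 = 1 := by
  have hs : 0 < 1 + r ^ 2 := by positivity
  rw [norm_smul, norm_smul, hu, hv, Real.norm_eq_abs, abs_of_nonneg (by positivity), mul_pow,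
    mul_pow, inv_pow, Real.sq_sqrt hs.le]
  field_simp
  ring

section invNormalize

variable {n : ℕ} (h₂ : 𝕊 n ≃ₜ 𝕊 n)

lemma norm_smul_invNormalize (w : 𝔼 n) : ‖‖w‖ • invNormalize n h₂ w‖ = ‖w‖ := by
  rcases eq_or_ne w 0 with rfl | hw
  · simp
  · rw [invNormalize, dif_neg hw, norm_smul, norm_eq_of_mem_sphere, mul_one, norm_norm]

lemma invNormalize_smul {t : ℝ} (ht : 0 < t) (y : 𝕊 n) :
    invNormalize n h₂ (t • (h₂ y : 𝔼 n)) = y := by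
  have hy : ‖(h₂ y : 𝔼 n)‖ = 1 := norm_eq_of_mem_sphere _
  have hne : t • (h₂ y : 𝔼 n) ≠ 0 := smul_ne_zero ht.ne' (by rintro h; simp [h] at hy)
  rw [invNormalize, dif_neg hne]
  congr 1
  rw [Homeomorph.symm_apply_eq]
  ext1
  simp only [norm_smul, hy, Real.norm_eq_abs, abs_of_pos ht, mul_one, smul_smul,
    inv_mul_cancel₀ ht.ne', one_smul]

end invNormalize

section milnorMap

variable {m n : ℕ} (h₁ : 𝕊 m ≃ₜ 𝕊 m) (h₂ : 𝕊 n ≃ₜ 𝕊 n)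

lemma milnorMap_inl (p : 𝔼 m × 𝕊 n) : milnorMap m n h₁ h₂ (Sum.inl p) =
    ((√(1 + ‖p.1‖ ^ 2))⁻¹ • p.1, (√(1 + ‖p.1‖ ^ 2))⁻¹ • (p.2 : 𝔼 n)) := rfl

lemma milnorMap_inr (q : 𝕊 m × 𝔼 n) : milnorMap m n h₁ h₂ (Sum.inr q) =
    ((√(1 + ‖q.2‖ ^ 2))⁻¹ • (h₁.symm q.1 : 𝔼 m),
      (√(1 + ‖q.2‖ ^ 2))⁻¹ • ‖q.2‖ • invNormalize n h₂ q.2) := rfl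

lemma milnorMap_mem_sphere (c : (𝔼 m × 𝕊 n) ⊕ (𝕊 m × 𝔼 n)) :
    ‖(milnorMap m n h₁ h₂ c).1‖ ^ 2 + ‖(milnorMap m n h₁ h₂ c).2‖ ^ 2 = 1 := by
  rcases c with p | q
  · exact norm_sq_add_norm_sq_inv_sqrt_smul rfl (norm_eq_of_mem_sphere p.2)
  · rw [milnorMap_inr, add_comm]
    exact norm_sq_add_norm_sq_inv_sqrt_smul (norm_smul_invNormalize h₂ q.2)
      (norm_eq_of_mem_sphere _)

lemma milnorMap_eq_of_milnorRel {a b : (𝔼 m × 𝕊 n) ⊕ (𝕊 m × 𝔼 n)}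
    (hab : milnorRel m n h₁ h₂ a b) : milnorMap m n h₁ h₂ a = milnorMap m n h₁ h₂ b := by
  rcases a with p | q <;> rcases b with p' | q' <;> try exact hab.elim
  obtain ⟨t, ht, x, y, hp₁, hp₂, hq₁, hq₂⟩ := hab
  have hx : ‖(x : 𝔼 m)‖ = 1 := norm_eq_of_mem_sphere x
  have hy : ‖(h₂ y : 𝔼 n)‖ = 1 := norm_eq_of_mem_sphere _
  have hs : √(1 + t ^ 2) ≠ 0 := (Real.sqrt_pos.mpr (by positivity)).ne'
  rw [milnorMap_inl, milnorMap_inr, hp₁, hp₂, hq₁, hq₂, Homeomorph.symm_apply_apply,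
    invNormalize_smul h₂ (inv_pos.mpr ht)]
  simp only [norm_smul, hx, hy, Real.norm_eq_abs, abs_of_pos ht, abs_of_pos (inv_pos.mpr ht),
    mul_one, sqrt_one_add_inv_sq ht, smul_smul]
  congr 2 <;> field_simp

noncomputable def milnorInv (z : 𝔼 m × 𝔼 n) (hz : ‖z.1‖ ^ 2 + ‖z.2‖ ^ 2 = 1) :
    (𝔼 m × 𝕊 n) ⊕ (𝕊 m × 𝔼 n) :=
  haveI := Classical.dec (z.2 = 0)
  if hb : z.2 = 0 then
    Sum.inr (h₁ ⟨z.1, mem_sphere_zero_iff_norm.mpr <|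
      (pow_eq_one_iff_of_nonneg (norm_nonneg z.1) two_ne_zero).mp (by simpa [hb] using hz)⟩, 0)
  else
    Sum.inl (‖z.2‖⁻¹ • z.1, ⟨‖z.2‖⁻¹ • z.2, by simpa using norm_smul_inv_norm (𝕜 := ℝ) hb⟩)

lemma milnorInv_eq_inl {z : 𝔼 m × 𝔼 n} {hz : ‖z.1‖ ^ 2 + ‖z.2‖ ^ 2 = 1} {c : ℝ} (hc : 0 < c)
    {v : 𝔼 m} {y : 𝕊 n} (ha : z.1 = c • v) (hb : z.2 = c • (y : 𝔼 n)) :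
    milnorInv h₁ z hz = Sum.inl (v, y) := by
  have hcy : ‖z.2‖ = c := by
    rw [hb, norm_smul, norm_eq_of_mem_sphere, mul_one, Real.norm_of_nonneg hc.le]
  rw [milnorInv, dif_neg (norm_ne_zero_iff.mp (hcy ▸ hc.ne'))]
  congr
  · rw [hcy, ha, inv_smul_smul₀ hc.ne']
  · rw [hcy, hb, inv_smul_smul₀ hc.ne']

lemma milnorInv_eq_inr {z : 𝔼 m × 𝔼 n} {hz : ‖z.1‖ ^ 2 + ‖z.2‖ ^ 2 = 1} {x : 𝕊 m}
    (ha : z.1 = h₁.symm x) (hb : z.2 = 0) : milnorInv h₁ z hz = Sum.inr (x, 0) := by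
  rw [milnorInv, dif_pos hb]
  congr
  rw [eq_comm, ← Homeomorph.symm_apply_eq]
  exact Subtype.ext ha.symm

lemma milnorMap_milnorInv (z : 𝔼 m × 𝔼 n) (hz : ‖z.1‖ ^ 2 + ‖z.2‖ ^ 2 = 1) :
    milnorMap m n h₁ h₂ (milnorInv h₁ z hz) = z := by
  obtain ⟨a, b⟩ := z
  rw [milnorInv]
  split_ifs with hb
  · simp [milnorMap_inr, show b = 0 from hb]
  · have hb' : 0 < ‖b‖ := norm_pos_iff.mpr hb
    have hs : √(1 + ‖‖b‖⁻¹ • a‖ ^ 2) = ‖b‖⁻¹ := by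
      rw [Real.sqrt_eq_iff_eq_sq (by positivity) (inv_nonneg.mpr hb'.le), norm_smul, norm_inv,
        norm_norm]
      field_simp
      linarith
    simp only [milnorMap_inl, hs, inv_inv, smul_inv_smul₀ hb'.ne']

lemma milnorRel_milnorInv {c : (𝔼 m × 𝕊 n) ⊕ (𝕊 m × 𝔼 n)} {z : 𝔼 m × 𝔼 n}
    (hz : ‖z.1‖ ^ 2 + ‖z.2‖ ^ 2 = 1) (hcz : milnorMap m n h₁ h₂ c = z) :
    Relation.EqvGen (milnorRel m n h₁ h₂) c (milnorInv h₁ z hz) := by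
  subst hcz
  rcases c with p | ⟨x, w⟩
  · have hs : 0 < (√(1 + ‖p.1‖ ^ 2))⁻¹ := inv_pos.mpr (Real.sqrt_pos.mpr (by positivity))
    rw [milnorInv_eq_inl h₁ (hz := hz) hs (v := p.1) (y := p.2) rfl rfl]
    exact Relation.EqvGen.refl _
  rcases eq_or_ne w 0 with rfl | hw
  · rw [milnorInv_eq_inr h₁ (hz := hz) (x := x)
      (by simp [milnorMap_inr]) (by simp [milnorMap_inr])]
    exact Relation.EqvGen.refl _
  · have hw' : 0 < ‖w‖ := norm_pos_iff.mpr hw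
    set y : 𝕊 n := h₂.symm ⟨‖w‖⁻¹ • w, by simpa using norm_smul_inv_norm (𝕜 := ℝ) hw⟩ with hy
    have hu : invNormalize n h₂ w = y := by rw [invNormalize, dif_neg hw]
    have hc : 0 < (√(1 + ‖w‖ ^ 2))⁻¹ * ‖w‖ :=
      mul_pos (inv_pos.mpr (Real.sqrt_pos.mpr (by positivity))) hw'
    rw [milnorInv_eq_inl h₁ (hz := hz) hc
      (v := ‖w‖⁻¹ • (h₁.symm x : 𝔼 m)) (y := y) ?_ ?_]
    · refine .symm _ _ (.rel _ _ ⟨‖w‖⁻¹, inv_pos.mpr hw', h₁.symm x, y, rfl, rfl, by simp, ?_⟩)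
      simp [hy, smul_inv_smul₀ hw'.ne']
    · simp only [milnorMap_inr, smul_smul, mul_assoc, mul_inv_cancel₀ hw'.ne', mul_one]
    · simp only [milnorMap_inr, hu, smul_smul]

end milnorMap

/-- For homeomorphisms `h₁ : Sᵐ → Sᵐ`, `h₂ : Sⁿ → Sⁿ`, the chart-wise map
`h` descends to a well-defined bijection from the glued space `M^{m+n+1}_{(h₁,h₂)}`
(the quotient of the disjoint union by the gluing relation) onto the unit sphere
`S^{m+n+1}`: two points have the same image iff they are identified in the quotient,
and the range of `h` is exactly the unit sphere. -/
theorem stmt_8 (m n : ℕ)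
    (h₁ : Metric.sphere (0 : EuclideanSpace ℝ (Fin (m + 1))) 1 ≃ₜ
          Metric.sphere (0 : EuclideanSpace ℝ (Fin (m + 1))) 1)
    (h₂ : Metric.sphere (0 : EuclideanSpace ℝ (Fin (n + 1))) 1 ≃ₜ
          Metric.sphere (0 : EuclideanSpace ℝ (Fin (n + 1))) 1) :
    (∀ a b, milnorMap m n h₁ h₂ a = milnorMap m n h₁ h₂ b ↔
        Relation.EqvGen (milnorRel m n h₁ h₂) a b) ∧
    Set.range (milnorMap m n h₁ h₂) =
      {q : EuclideanSpace ℝ (Fin (m + 1)) × EuclideanSpace ℝ (Fin (n + 1)) |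
        ‖q.1‖ ^ 2 + ‖q.2‖ ^ 2 = 1} := by
  refine ⟨fun a b => ⟨fun hab => ?_, fun hab => ?_⟩, ?_⟩
  · have ha := milnorMap_mem_sphere h₁ h₂ a
    exact (milnorRel_milnorInv h₁ h₂ ha rfl).trans _ _ _
      ((milnorRel_milnorInv h₁ h₂ ha hab.symm).symm _ _)
  · exact (Equivalence.eqvGen_iff (Setoid.ker (milnorMap m n h₁ h₂)).iseqv).mp
      (hab.mono fun _ _ => milnorMap_eq_of_milnorRel h₁ h₂)
  · ext z
    exact ⟨by rintro ⟨c, rfl⟩; exact milnorMap_mem_sphere h₁ h₂ c,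
      fun hz => ⟨milnorInv h₁ z hz, milnorMap_milnorInv h₁ h₂ z hz⟩⟩
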